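/- Let k be a perfect field of characteristic p > 0, let V be a finite-dimensional k-vector space and let F be a Frobenius-semilinear endomorphism of V. Then there exist F-invariant k-subspaces V_s and V_n of V such that V is the internal direct sum of V_s and V_n, the restriction of F to V_s is bijective, and the restriction of F to V_n is nilpotent (i.e. some iterate F^N vanishes identically on V_n). -/

import Mathlib

/-!
Kernels and images of the iterates `F^n` are subspaces (the images because `k` is perfect, so
`c ↦ c ^ p ^ n` is onto), so in finite dimension both chains stabilise from some `n` on. Fitting's
argument then goes through unchanged for a semilinear map: `V = im F^n ⊕ ker F^n`, `F` is
bijective on `im F^n`, and `F^n` kills `ker F^n`.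
-/

open Function Set

instance RingHom.ringHomSurjective_pow {R : Type*} [Semiring R] (σ : R →+* R)
    [RingHomSurjective σ] (n : ℕ) : RingHomSurjective (σ ^ n) :=
  ⟨by rw [RingHom.coe_pow]; exact σ.surjective.iterate n⟩

namespace LinearMap

variable {R V : Type*} [Ring R] [AddCommGroup V] [Module R V] {σ : R →+* R}
  (f : V →ₛₗ[σ] V)

def iterate (n : ℕ) : V →ₛₗ[σ ^ n] V where
  toFun := f^[n]
  map_add' := iterate_map_add f n
  map_smul' c v := by
    rw [RingHom.coe_pow]
    induction n generalizing c v with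
    | zero => rfl
    | succ n ih => simp only [iterate_succ_apply', ih, map_smulₛₗ]

@[simp]
lemma coe_iterate (n : ℕ) : ⇑(f.iterate n) = f^[n] := rfl

lemma iterate_add_apply (m n : ℕ) (v : V) : f.iterate (m + n) v = f.iterate m (f.iterate n v) :=
  Function.iterate_add_apply f m n v

lemma monotone_ker_iterate : Monotone fun n ↦ ker (f.iterate n) := by
  refine monotone_nat_of_le_succ fun n v hv ↦ ?_
  rw [mem_ker] at hv ⊢
  rw [coe_iterate, iterate_succ_apply', ← coe_iterate, hv, map_zero]

lemma mapsTo_ker_iterate (n : ℕ) : MapsTo f (ker (f.iterate n)) (ker (f.iterate n)) := by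
  intro v hv
  rw [SetLike.mem_coe, mem_ker] at hv ⊢
  rw [coe_iterate, ← iterate_succ_apply, iterate_succ_apply', ← coe_iterate, hv, map_zero]

variable [RingHomSurjective σ]

lemma antitone_range_iterate : Antitone fun n ↦ range (f.iterate n) := by
  refine antitone_nat_of_succ_le fun n ↦ ?_
  rintro - ⟨v, rfl⟩
  exact ⟨f v, rfl⟩

lemma mapsTo_range_iterate (n : ℕ) : MapsTo f (range (f.iterate n)) (range (f.iterate n)) := by
  rintro - ⟨v, rfl⟩
  exact ⟨f v, by simp only [coe_iterate, ← iterate_succ_apply, iterate_succ_apply']⟩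

variable {f} {n : ℕ}

lemma disjoint_range_ker_iterate (h : ker (f.iterate (n + n)) ≤ ker (f.iterate n)) :
    Disjoint (range (f.iterate n)) (ker (f.iterate n)) := by
  rw [Submodule.disjoint_def]
  rintro - ⟨v, rfl⟩ hv
  rw [mem_ker, ← iterate_add_apply] at hv
  exact h hv

lemma codisjoint_range_ker_iterate (h : range (f.iterate n) ≤ range (f.iterate (n + n))) :
    Codisjoint (range (f.iterate n)) (ker (f.iterate n)) := by
  rw [codisjoint_iff, Submodule.eq_top_iff']
  intro v
  obtain ⟨w, hw⟩ := h (mem_range_self (f.iterate n) v)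
  rw [iterate_add_apply] at hw
  exact Submodule.mem_sup.mpr ⟨_, mem_range_self _ w, v - f.iterate n w, by
    rw [mem_ker, map_sub, hw, sub_self], add_sub_cancel _ _⟩

lemma bijOn_range_iterate (hker : ker (f.iterate (n + 1)) ≤ ker (f.iterate n))
    (hrange : range (f.iterate n) ≤ range (f.iterate (n + 1))) :
    BijOn f (range (f.iterate n)) (range (f.iterate n)) := by
  refine ⟨f.mapsTo_range_iterate n, ?_, ?_⟩
  · rintro - ⟨a, rfl⟩ - ⟨b, rfl⟩ hab
    have : a - b ∈ ker (f.iterate (n + 1)) := by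
      rw [mem_ker, map_sub, sub_eq_zero]
      simpa only [coe_iterate, iterate_succ_apply'] using hab
    rw [← sub_eq_zero, ← map_sub]
    exact hker this
  · rintro v hv
    obtain ⟨w, rfl⟩ := hrange hv
    exact ⟨f.iterate n w, mem_range_self _ w, by simp only [coe_iterate, iterate_succ_apply']⟩

variable [IsNoetherian R V] [IsArtinian R V]

lemma exists_ker_range_iterate_eq (f : V →ₛₗ[σ] V) : ∃ n, ∀ m, n ≤ m →
    ker (f.iterate m) = ker (f.iterate n) ∧ range (f.iterate m) = range (f.iterate n) := by
  obtain ⟨a, ha⟩ := monotone_stabilizes_iff_noetherian.mpr inferInstance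
    ⟨_, f.monotone_ker_iterate⟩
  obtain ⟨b, hb⟩ := IsArtinian.monotone_stabilizes ⟨_, f.antitone_range_iterate⟩
  refine ⟨max a b, fun m hm ↦ ⟨?_, ?_⟩⟩
  · exact (ha m (le_of_max_le_left hm)).symm.trans (ha _ (le_max_left a b))
  · exact (hb m (le_of_max_le_right hm)).symm.trans (hb _ (le_max_right a b))

theorem exists_isCompl_bijOn_iterate_eq_zero (f : V →ₛₗ[σ] V) :
    ∃ Vs Vn : Submodule R V, IsCompl Vs Vn ∧ MapsTo f Vs Vs ∧ MapsTo f Vn Vn ∧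
      BijOn f Vs Vs ∧ ∃ N, ∀ v ∈ Vn, f^[N] v = 0 := by
  obtain ⟨n, hn⟩ := f.exists_ker_range_iterate_eq
  have hker (m) (hm : n ≤ m) := (hn m hm).1.le
  have hrange (m) (hm : n ≤ m) := (hn m hm).2.ge
  exact ⟨_, _, ⟨disjoint_range_ker_iterate (hker _ le_self_add),
    codisjoint_range_ker_iterate (hrange _ le_self_add)⟩, f.mapsTo_range_iterate n,
    f.mapsTo_ker_iterate n, bijOn_range_iterate (hker _ n.le_succ) (hrange _ n.le_succ),
    n, fun _ ↦ mem_ker.mp⟩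

end LinearMap

theorem stmt_0 (p : ℕ) [Fact p.Prime] (k : Type*) [Field k] [CharP k p] [PerfectRing k p]
    (V : Type*) [AddCommGroup V] [Module k V] [FiniteDimensional k V]
    (F : V → V)
    (hFadd : ∀ x y : V, F (x + y) = F x + F y)
    (hFsmul : ∀ (c : k) (v : V), F (c • v) = c ^ p • F v) :
    ∃ Vs Vn : Submodule k V,
      IsCompl Vs Vn ∧
      (∀ v ∈ Vs, F v ∈ Vs) ∧
      (∀ v ∈ Vn, F v ∈ Vn) ∧
      Set.BijOn F (Vs : Set V) (Vs : Set V) ∧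
      (∃ N : ℕ, ∀ v ∈ Vn, F^[N] v = 0) := by
  have : RingHomSurjective (frobenius k p) := ⟨surjective_frobenius k p⟩
  let f : V →ₛₗ[frobenius k p] V := ⟨⟨F, hFadd⟩, hFsmul⟩
  exact f.exists_isCompl_bijOn_iterate_eq_zero
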